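/- arXiv:1709.07312 — 10 statements merged into one kernel-verified Lean document; each statement's English description precedes it below -/
import Mathlib

section
/- If f : ℕ → ℝ is a sequence and u, v, w are positive integers with vw odd, then ∑_{k=1}^{w} (−1)^{k−1} [f(uk+uv) + f(uk)] = ∑_{k=1}^{v} (−1)^{k−1} [f(uk+uw) + f(uk)]. -/
open Finset

/- Put `g k = f (u k)` and `S n = ∑_{k=1}^n (-1)^(k-1) g k`. Shifting the index by an odd `v`
flips the sign, so `∑_{k=1}^w (-1)^(k-1) g (k + v) = S v - S (v + w)`. Hence the left-hand side
equals `S v + S w - S (v + w)`, which is symmetric in `v` and `w` once both are odd. -/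

section AlternatingSum

variable {R : Type*} [CommRing R]

def altPartialSum (g : ℕ → R) (n : ℕ) : R :=
  ∑ k ∈ Icc 1 n, (-1 : R) ^ (k - 1) * g k

theorem altPartialSum_succ (g : ℕ → R) (n : ℕ) :
    altPartialSum g (n + 1) = altPartialSum g n + (-1 : R) ^ n * g (n + 1) := by
  rw [altPartialSum, sum_Icc_succ_top (by omega), Nat.add_sub_cancel, altPartialSum]

theorem sum_Icc_neg_one_pow_mul_shift_add_self {v : ℕ} (hv : Odd v) (g : ℕ → R) (w : ℕ) :
    ∑ k ∈ Icc 1 w, (-1 : R) ^ (k - 1) * (g (k + v) + g k) =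
      altPartialSum g v + altPartialSum g w - altPartialSum g (v + w) := by
  induction w with
  | zero => simp [altPartialSum]
  | succ n ih =>
    have hsign : (-1 : R) ^ (v + n) = -(-1) ^ n := by rw [pow_add, hv.neg_one_pow]; ring
    rw [sum_Icc_succ_top (by omega), ih, ← add_assoc, altPartialSum_succ, altPartialSum_succ,
      Nat.add_sub_cancel, hsign, add_right_comm n 1 v, add_comm n v]
    ring

end AlternatingSum

theorem stmt2_general (f : ℕ → ℝ) (u v w : ℕ)
    (hodd : Odd (v * w)) :
    ∑ k ∈ Icc 1 w, (-1 : ℝ)^(k-1) * (f (u*k + u*v) + f (u*k)) =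
    ∑ k ∈ Icc 1 v, (-1 : ℝ)^(k-1) * (f (u*k + u*w) + f (u*k)) := by
  obtain ⟨hv, hw⟩ := Nat.odd_mul.mp hodd
  simp only [← mul_add]
  rw [sum_Icc_neg_one_pow_mul_shift_add_self hv (fun k => f (u * k)),
    sum_Icc_neg_one_pow_mul_shift_add_self hw (fun k => f (u * k)),
    add_comm v w, add_comm (altPartialSum _ v)]

theorem stmt2 (f : ℕ → ℝ) (u v w : ℕ) (hu : 0 < u) (hv : 0 < v) (hw : 0 < w)
    (hodd : Odd (v * w)) :
    ∑ k ∈ Icc 1 w, (-1 : ℝ)^(k-1) * (f (u*k + u*v) + f (u*k)) =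
    ∑ k ∈ Icc 1 v, (-1 : ℝ)^(k-1) * (f (u*k + u*w) + f (u*k)) :=
  stmt2_general f u v w hodd
end

section
/- For integers a, b, c with a even, F_a · G_{2b+a+c} = F_{a+b} · G_{a+b+c} − F_b · G_{b+c}. -/
/-!
Writing `G (n + k) = F k * G (n + 1) + F (k - 1) * G n` (both sides satisfy the recurrence in `k`
and agree at `k = 0, 1`) turns the identity into d'Ocagne's identity
`F (a + b) * F (a - 1) - F a * F (a + b - 1) = (-1) ^ a * F b`, a consequence of Cassini's
identity; for even `a` the sign disappears.
-/

def IsFibonacciLike {M : Type*} [Add M] (G : ℤ → M) : Prop :=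
  ∀ n : ℤ, G (n + 1) = G n + G (n - 1)

theorem Int.isFibonacciLike_fib : IsFibonacciLike Int.fib := fun n => by
  rw [add_comm (fib n), ← sub_add_cancel n 1, add_assoc, one_add_one_eq_two, fib_add_two,
    add_sub_cancel_right]

theorem Int.fib_add_mul_fib_sub_one_sub_fib_mul_fib_add_sub_one (a b : ℤ) :
    fib (a + b) * fib (a - 1) - fib a * fib (a + b - 1) = (-1) ^ a.natAbs * fib b := by
  have cassini := fib_succ_mul_fib_pred_sub_fib_sq (a - 1)
  have sign : (-1 : ℤ) ^ (a - 1).natAbs = -(-1) ^ a.natAbs := by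
    rw [← coe_negOnePow ℤ, ← coe_negOnePow ℤ, negOnePow_sub, negOnePow_one]
    push_cast
    ring
  rw [sign, sub_add_cancel] at cassini
  rw [fib_add a b, show a + b - 1 = a - 1 + b by ring, fib_add (a - 1) b]
  linear_combination (norm := ring_nf) -fib b * cassini

namespace IsFibonacciLike

variable {M : Type*} [AddCommGroup M] {G H : ℤ → M}

theorem ext_of_apply_zero_of_apply_one (hG : IsFibonacciLike G) (hH : IsFibonacciLike H)
    (h0 : G 0 = H 0) (h1 : G 1 = H 1) : G = H := by
  suffices ∀ k, G k = H k ∧ G (k + 1) = H (k + 1) from funext fun k => (this k).1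
  intro k
  induction k using Int.induction_on with
  | zero => exact ⟨h0, h1⟩
  | succ k ih =>
    refine ⟨ih.2, ?_⟩
    rw [hG, hH, add_sub_cancel_right, ih.1, ih.2]
  | pred k ih =>
    refine ⟨?_, by rw [sub_add_cancel, ih.1]⟩
    have hG' := hG (-k)
    have hH' := hH (-k)
    rw [ih.1, ih.2] at hG'
    exact add_left_cancel (hG'.symm.trans hH')

theorem eq_fib {F : ℤ → ℤ} (hF : IsFibonacciLike F) (h0 : F 0 = 0) (h1 : F 1 = 1) :
    F = Int.fib :=
  hF.ext_of_apply_zero_of_apply_one Int.isFibonacciLike_fib h0 h1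

theorem apply_add (hG : IsFibonacciLike G) (n k : ℤ) :
    G (n + k) = Int.fib k • G (n + 1) + Int.fib (k - 1) • G n := by
  refine congrFun (ext_of_apply_zero_of_apply_one (G := fun k => G (n + k))
    (H := fun k => Int.fib k • G (n + 1) + Int.fib (k - 1) • G n) ?_ ?_ ?_ ?_) k
  · intro k
    simpa only [add_assoc, add_sub_assoc] using hG (n + k)
  · intro k
    have h1 := Int.isFibonacciLike_fib k
    have h2 := Int.isFibonacciLike_fib (k - 1)
    rw [sub_add_cancel] at h2
    simp only [h1, h2, add_sub_cancel_right, add_smul]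
    abel
  · simp
  · simp

theorem fib_smul_apply_add_add (hG : IsFibonacciLike G) (n a b : ℤ) :
    Int.fib a • G (n + a + b) =
      Int.fib (a + b) • G (n + a) - ((-1) ^ a.natAbs * Int.fib b) • G n := by
  rw [← Int.fib_add_mul_fib_sub_one_sub_fib_mul_fib_add_sub_one, add_assoc, hG.apply_add n (a + b),
    hG.apply_add n a]
  module

end IsFibonacciLike

theorem stmt3 (F G : ℤ → ℤ)
    (hF0 : F 0 = 0) (hF1 : F 1 = 1) (hF : ∀ n : ℤ, F (n+1) = F n + F (n-1))
    (hG : ∀ n : ℤ, G (n+1) = G n + G (n-1))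
    (a b c : ℤ) (ha : Even a) :
    F a * G (2*b + a + c) = F (a+b) * G (a+b+c) - F b * G (b+c) := by
  obtain rfl : F = Int.fib := IsFibonacciLike.eq_fib hF hF0 hF1
  have h := IsFibonacciLike.fib_smul_apply_add_add hG (b + c) a b
  rw [(Int.natAbs_even.mpr ha).neg_one_pow, one_mul] at h
  rwa [show 2 * b + a + c = b + c + a + b by ring, show a + b + c = b + c + a by ring]
end

section
/- For integers a, b: F_b · G_a − F_a · G_b = (−1)^a · G_0 · F_{b−a}. -/
/-!
Both sides are Fibonacci-like as functions of `b`, so it suffices that they agree at `b = a` and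
`b = a + 1`. At `b = a` both vanish. At `b = a + 1` the left side is the Casoratian
`F (a + 1) * G a - F a * G (a + 1)` of the two sequences, which changes sign at every step and
equals `F 1 * G 0 - F 0 * G 1 = G 0` at `a = 0`.
-/

variable {R : Type*} [CommRing R]

def IsFibLike (u : ℤ → R) : Prop := ∀ n, u (n + 1) = u n + u (n - 1)

def casoratian (u v : ℤ → R) (n : ℤ) : R := u (n + 1) * v n - u n * v (n + 1)

lemma eq_neg_one_pow_natAbs_mul_of_add_one {s : ℤ → R} (hs : ∀ n, s (n + 1) = -s n) (n : ℤ) :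
    s n = (-1) ^ n.natAbs * s 0 := by
  rw [← Int.coe_negOnePow]
  induction n using Int.induction_on with
  | zero => simp
  | succ m ih => rw [hs, ih, Int.negOnePow_succ]; simp
  | pred m ih =>
    rw [neg_eq_iff_eq_neg.mp (hs (-m - 1)).symm, sub_add_cancel, ih, Int.negOnePow_sub]
    simp

namespace IsFibLike

variable {u v : ℤ → R}

lemma sub (hu : IsFibLike u) (hv : IsFibLike v) : IsFibLike (fun n => u n - v n) := fun n => by
  simp only [hu n, hv n]; ring

lemma const_mul (hu : IsFibLike u) (c : R) : IsFibLike (fun n => c * u n) := fun n => by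
  simp only [hu n]; ring

lemma mul_const (hu : IsFibLike u) (c : R) : IsFibLike (fun n => u n * c) := fun n => by
  simp only [hu n]; ring

lemma comp_sub_const (hu : IsFibLike u) (k : ℤ) : IsFibLike (fun n => u (n - k)) := fun n => by
  convert hu (n - k) using 2 <;> ring_nf

lemma eq_of_eq_of_eq_add_one (hu : IsFibLike u) (hv : IsFibLike v) {k : ℤ} (h₀ : u k = v k)
    (h₁ : u (k + 1) = v (k + 1)) : u = v := by
  suffices h : ∀ m : ℤ, u (k + m) = v (k + m) ∧ u (k + m + 1) = v (k + m + 1) by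
    funext n
    simpa using (h (n - k)).1
  intro m
  induction m using Int.induction_on with
  | zero => simpa using ⟨h₀, h₁⟩
  | succ m ih =>
    refine ⟨by rw [← add_assoc]; exact ih.2, ?_⟩
    rw [← add_assoc, hu, hv, add_sub_cancel_right, ih.1, ih.2]
  | pred m ih =>
    rw [← add_sub_assoc, sub_add_cancel]
    refine ⟨?_, ih.1⟩
    rw [eq_sub_of_add_eq' (hu _).symm, eq_sub_of_add_eq' (hv _).symm, ih.1, ih.2]

lemma casoratian_add_one (hu : IsFibLike u) (hv : IsFibLike v) (n : ℤ) :
    casoratian u v (n + 1) = -casoratian u v n := by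
  simp only [casoratian, hu (n + 1), hv (n + 1), add_sub_cancel_right]
  ring

lemma casoratian_eq (hu : IsFibLike u) (hv : IsFibLike v) (n : ℤ) :
    casoratian u v n = (-1) ^ n.natAbs * casoratian u v 0 :=
  eq_neg_one_pow_natAbs_mul_of_add_one (casoratian_add_one hu hv) n

end IsFibLike

theorem stmt6 (F G : ℤ → ℤ)
    (hF0 : F 0 = 0) (hF1 : F 1 = 1) (hF : ∀ n : ℤ, F (n+1) = F n + F (n-1))
    (hG : ∀ n : ℤ, G (n+1) = G n + G (n-1))
    (a b : ℤ) :
    F b * G a - F a * G b = (-1)^a.natAbs * G 0 * F (b-a) := by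
  have hF : IsFibLike F := hF
  have hG : IsFibLike G := hG
  have hLHS : IsFibLike (fun b => F b * G a - F a * G b) := (hF.mul_const _).sub (hG.const_mul _)
  have hRHS : IsFibLike (fun b => (-1) ^ a.natAbs * G 0 * F (b - a)) :=
    (hF.comp_sub_const a).const_mul _
  have hCas : casoratian F G a = (-1) ^ a.natAbs * G 0 := by
    rw [hF.casoratian_eq hG]
    simp [casoratian, hF0, hF1]
  refine congrFun (hLHS.eq_of_eq_of_eq_add_one hRHS (k := a) ?_ ?_) b
  · simp [hF0]
  · simpa [casoratian, hF1] using hCas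
end

section
/- Let G be a generalized Fibonacci sequence with G_0 ≠ 0. If n, q are nonnegative integers, p is a nonzero positive integer, and G_{pk} ≠ 0 for all 1 ≤ k ≤ n+q, then F_{pq} · ∑_{k=1}^{n} (−1)^{pk} / (G_{pk} G_{pk+pq}) = F_{pn} · ∑_{k=1}^{q} (−1)^{pk} / (G_{pk} G_{pk+pn}), where the sums are taken over real numbers. -/
/-!
For any two sequences `G`, `H` with the Fibonacci recurrence, the Casoratian
`H (m+1) G m - H m G (m+1)` alternates in sign, which gives the d'Ocagne-type identity
`H (m+b) G m - H m G (m+b) = (-1)^m F_b D` with `D = H 1 G 0 - H 0 G 1`. Dividing by `G m G (m+b)`,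
each term `D F_{pq} (-1)^{pk} / (G_{pk} G_{pk+pq})` becomes `f (k+q) - f k` for `f k = H_{pk} / G_{pk}`,
so `D` times the left side telescopes to `S (n+q) - S q - S n` with `S m = ∑_{k=1}^m f k`,
an expression symmetric in `n` and `q`. Choosing `H` with `D = G_0² + G_1²` and cancelling `D` proves
the theorem, unless `G` vanishes identically, in which case both sides are zero since `x / 0 = 0`.
-/

open Finset

lemma sum_Icc_sub_shift {M : Type*} [AddCommGroup M] (f : ℕ → M) (n q : ℕ) :
    ∑ k ∈ Icc 1 n, (f (k + q) - f k) =
      ∑ k ∈ Icc 1 (n + q), f k - ∑ k ∈ Icc 1 q, f k - ∑ k ∈ Icc 1 n, f k := by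
  induction n with
  | zero => simp
  | succ n ih =>
    rw [sum_Icc_succ_top (by omega), ih, show n + 1 + q = n + q + 1 by omega,
      sum_Icc_succ_top (by omega), sum_Icc_succ_top (by omega), show n + q + 1 = n + 1 + q by omega]
    abel

section Gibonacci

variable {G H : ℕ → ℝ} (hG : ∀ i, G (i + 2) = G (i + 1) + G i)
  (hH : ∀ i, H (i + 2) = H (i + 1) + H i)
include hG

lemma gibonacci_add (a b : ℕ) :
    G (a + b + 1) = Nat.fib (b + 1) * G (a + 1) + Nat.fib b * G a := by
  induction b generalizing a with
  | zero => simp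
  | succ b ih =>
    rw [show a + (b + 1) + 1 = (a + 1) + b + 1 by omega, ih, hG, Nat.fib_add_two]
    push_cast
    ring

lemma gibonacci_eq_zero (h0 : G 0 = 0) (h1 : G 1 = 0) : G = 0 := by
  funext i
  cases i with
  | zero => exact h0
  | succ i => simpa [h0, h1] using gibonacci_add hG 0 i

include hH

lemma gibonacci_casoratian (m : ℕ) :
    H (m + 1) * G m - H m * G (m + 1) = (-1) ^ m * (H 1 * G 0 - H 0 * G 1) := by
  induction m with
  | zero => simp
  | succ m ih =>
    rw [hG, hH, pow_succ]
    linear_combination -ih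

lemma gibonacci_dOcagne (m b : ℕ) :
    H (m + b) * G m - H m * G (m + b) = (-1) ^ m * Nat.fib b * (H 1 * G 0 - H 0 * G 1) := by
  cases b with
  | zero => simp
  | succ b =>
    rw [← add_assoc, gibonacci_add hG, gibonacci_add hH, mul_assoc, mul_left_comm,
      ← gibonacci_casoratian hG hH]
    ring

lemma gibonacci_mul_sum_eq (p n q : ℕ) (hGnz : ∀ k ∈ Icc 1 (n + q), G (p * k) ≠ 0) :
    (H 1 * G 0 - H 0 * G 1) *
        ((Nat.fib (p * q) : ℝ) * ∑ k ∈ Icc 1 n, (-1 : ℝ) ^ (p * k) / (G (p * k) * G (p * k + p * q))) =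
      ∑ k ∈ Icc 1 (n + q), H (p * k) / G (p * k) - ∑ k ∈ Icc 1 q, H (p * k) / G (p * k)
        - ∑ k ∈ Icc 1 n, H (p * k) / G (p * k) := by
  rw [← sum_Icc_sub_shift, mul_sum, mul_sum]
  refine sum_congr rfl fun k hk => ?_
  have hk := mem_Icc.mp hk
  have hGk : G (p * k) ≠ 0 := hGnz k (mem_Icc.mpr ⟨hk.1, by omega⟩)
  have hGkq : G (p * (k + q)) ≠ 0 := hGnz (k + q) (mem_Icc.mpr ⟨by omega, by omega⟩)
  rw [mul_add] at hGkq ⊢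
  rw [div_sub_div _ _ hGkq hGk, mul_comm (G _) (H (p * k)), gibonacci_dOcagne hG hH]
  field_simp

end Gibonacci

theorem stmt7_general (G : ℕ → ℝ) (hG : ∀ i, G (i+2) = G (i+1) + G i)
    (n q p : ℕ)
    (hGnz : ∀ k ∈ Icc 1 (n+q), G (p*k) ≠ 0) :
    (Nat.fib (p*q) : ℝ) * ∑ k ∈ Icc 1 n, (-1 : ℝ)^(p*k) / (G (p*k) * G (p*k + p*q)) =
    (Nat.fib (p*n) : ℝ) * ∑ k ∈ Icc 1 q, (-1 : ℝ)^(p*k) / (G (p*k) * G (p*k + p*n)) := by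
  by_cases hG01 : G 0 = 0 ∧ G 1 = 0
  · obtain rfl : G = 0 := gibonacci_eq_zero hG hG01.1 hG01.2
    simp
  let H : ℕ → ℝ := fun i => (G 0 + G 1) * Nat.fib i - G 1 * Nat.fib (i + 1)
  have hH : ∀ i, H (i + 2) = H (i + 1) + H i := by
    intro i
    simp only [H, Nat.fib_add_two]
    push_cast
    ring
  have hD : H 1 * G 0 - H 0 * G 1 ≠ 0 := by
    rw [show H 1 * G 0 - H 0 * G 1 = G 0 * G 0 + G 1 * G 1 by simp [H]]
    exact mt mul_self_add_mul_self_eq_zero.mp hG01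
  refine mul_left_cancel₀ hD ?_
  rw [gibonacci_mul_sum_eq hG hH p n q hGnz,
    gibonacci_mul_sum_eq hG hH p q n (by rwa [add_comm]), add_comm q n]
  ring

theorem stmt7 (G : ℕ → ℝ) (hG : ∀ i, G (i+2) = G (i+1) + G i) (hG0 : G 0 ≠ 0)
    (n q p : ℕ) (hp : 0 < p)
    (hGnz : ∀ k ∈ Icc 1 (n+q), G (p*k) ≠ 0) :
    (Nat.fib (p*q) : ℝ) * ∑ k ∈ Icc 1 n, (-1 : ℝ)^(p*k) / (G (p*k) * G (p*k + p*q)) =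
    (Nat.fib (p*n) : ℝ) * ∑ k ∈ Icc 1 q, (-1 : ℝ)^(p*k) / (G (p*k) * G (p*k + p*n)) :=
  stmt7_general G hG n q p hGnz
end

section
/- Let G be a generalized Fibonacci sequence with nonzero terms G_{pk} for 1 ≤ k ≤ n+q. If n and q are nonnegative even integers and p is a positive integer, then F_{pq} · ∑_{k=1}^{n} (−1)^{k(p−1)} / (G_{pk} G_{pk+pq}) = F_{pn} · ∑_{k=1}^{q} (−1)^{k(p−1)} / (G_{pk} G_{pk+pn}). -/
/-!
Vajda's identity `F_{b+c} G_{a+b} - F_b G_{a+b+c} = (-1)^b F_c G_a` telescopes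
`F_{pq} / (G_{pk} G_{pk+pq})` into `∑_{j<q} (-1)^{pj} F_p / (G_{p(k+j)} G_{p(k+j+1)})`.
After redistributing signs, both sides of the theorem become `∑_{k=1}^{n} ∑_{j<q} (-1)^j w(k+j)`
with `n` and `q` exchanged on the right, for one weight `w`. For `n = 2a`, `q = 2b`, pairing
consecutive terms in both sums gives `∑_{l<a} ∑_{i<b} (w(2(l+i)+1) - w(2(l+i)+3))`, which is
symmetric in `a` and `b`.
-/

open Finset

section FibonacciLike

variable {R : Type*} [CommRing R] {G : ℕ → R}

theorem add_add_one_eq_fib_mul_add_fib_add_one_mul (hG : ∀ i, G (i + 2) = G (i + 1) + G i)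
    (a b : ℕ) : G (a + b + 1) = Nat.fib b * G a + Nat.fib (b + 1) * G (a + 1) := by
  induction b generalizing a with
  | zero => simp
  | succ b ih =>
    rw [show a + (b + 1) + 1 = a + 1 + b + 1 by ring, ih, hG, Nat.fib_add_two]
    push_cast
    ring

theorem fib_add_mul_sub_fib_mul (hG : ∀ i, G (i + 2) = G (i + 1) + G i) (a b c : ℕ) :
    Nat.fib (b + c) * G (a + b) - Nat.fib b * G (a + b + c) = (-1) ^ b * Nat.fib c * G a := by
  induction b using Nat.twoStepInduction generalizing a with
  | zero => simp
  | one =>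
    rw [show a + 1 + c = a + c + 1 by ring, add_add_one_eq_fib_mul_add_fib_add_one_mul hG,
      add_comm 1 c]
    simp
  | more b ih ih' =>
    -- the left side at `(b + 2, a)` is the sum of those at `(b + 1, a + 1)` and `(b, a + 2)`
    have h1 := ih (a + 2)
    have h2 := ih' (a + 1)
    have h3 := hG a
    rw [Nat.fib_add_two, show b + 2 + c = b + c + 2 by ring, Nat.fib_add_two]
    push_cast
    ring_nf at h1 h2 h3 ⊢
    linear_combination h1 + h2 + (-1) ^ b * Nat.fib c * h3

end FibonacciLike

theorem sum_Icc_two_mul {M : Type*} [AddCommMonoid M] (f : ℕ → M) (a : ℕ) :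
    ∑ k ∈ Icc 1 (2 * a), f k = ∑ l ∈ range a, (f (2 * l + 1) + f (2 * l + 2)) := by
  induction a with
  | zero => simp
  | succ a ih =>
    rw [mul_add, mul_one, sum_Icc_succ_top (by omega), sum_Icc_succ_top (by omega), ih,
      sum_range_succ]
    abel

theorem sum_range_two_mul_neg_one_pow_mul {R : Type*} [Ring R] (f : ℕ → R) (b : ℕ) :
    ∑ j ∈ range (2 * b), (-1) ^ j * f j = ∑ i ∈ range b, (f (2 * i) - f (2 * i + 1)) := by
  induction b with
  | zero => simp
  | succ b ih =>
    rw [mul_add, mul_one, sum_range_succ, sum_range_succ, ih, sum_range_succ, pow_succ,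
      (even_two_mul b).neg_one_pow]
    simp only [one_mul, mul_neg, mul_one, neg_mul]
    abel

theorem fib_mul_div_eq_sum_range {K : Type*} [Field K] {G : ℕ → K}
    (hG : ∀ i, G (i + 2) = G (i + 1) + G i) (a d m : ℕ) (hG0 : ∀ j ≤ m, G (a + d * j) ≠ 0) :
    Nat.fib (d * m) / (G a * G (a + d * m)) =
      ∑ j ∈ range m, (-1) ^ (d * j) * Nat.fib d / (G (a + d * j) * G (a + d * (j + 1))) := by
  refine (eq_sum_range_sub (fun m ↦ (Nat.fib (d * m) : K) / (G a * G (a + d * m))) m).trans ?_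
  simp only [mul_zero, Nat.fib_zero, Nat.cast_zero, zero_div, zero_add]
  refine sum_congr rfl fun j hj ↦ ?_
  have hj := mem_range.mp hj
  have ha : G a ≠ 0 := by simpa using hG0 0 (Nat.zero_le m)
  have hj0 := hG0 j hj.le
  have hj1 := hG0 (j + 1) hj
  have key := fib_add_mul_sub_fib_mul hG a (d * j) d
  rw [← mul_add_one, add_assoc, ← mul_add_one] at key
  field_simp
  linear_combination key

theorem sum_Icc_sum_range_neg_one_pow_comm {R : Type*} [CommRing R] (g : ℕ → R) {n q : ℕ}
    (hn : Even n) (hq : Even q) :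
    ∑ k ∈ Icc 1 n, ∑ j ∈ range q, (-1) ^ j * g (k + j) =
      ∑ k ∈ Icc 1 q, ∑ j ∈ range n, (-1) ^ j * g (k + j) := by
  have double : ∀ a b, ∑ k ∈ Icc 1 (2 * a), ∑ j ∈ range (2 * b), (-1) ^ j * g (k + j) =
      ∑ l ∈ range a, ∑ i ∈ range b, (g (2 * (l + i) + 1) - g (2 * (l + i) + 3)) := by
    intro a b
    rw [sum_Icc_two_mul]
    refine sum_congr rfl fun l _ ↦ ?_
    rw [sum_range_two_mul_neg_one_pow_mul, sum_range_two_mul_neg_one_pow_mul, ← sum_add_distrib]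
    refine sum_congr rfl fun i _ ↦ ?_
    rw [show 2 * l + 1 + (2 * i + 1) = 2 * l + 2 + 2 * i by ring]
    ring_nf
  obtain ⟨a, rfl⟩ := hn.two_dvd
  obtain ⟨b, rfl⟩ := hq.two_dvd
  rw [double, double, sum_comm]
  simp only [add_comm]

theorem fib_mul_mul_sum_eq_sum_sum_neg_one_pow {K : Type*} [Field K] {G : ℕ → K}
    (hG : ∀ i, G (i + 2) = G (i + 1) + G i) {p : ℕ} (hp : 0 < p) (n q : ℕ)
    (hG0 : ∀ k ∈ Icc 1 (n + q), G (p * k) ≠ 0) :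
    Nat.fib (p * q) * ∑ k ∈ Icc 1 n, (-1) ^ (k * (p - 1)) / (G (p * k) * G (p * k + p * q)) =
      ∑ k ∈ Icc 1 n, ∑ j ∈ range q, (-1) ^ j *
        ((-1) ^ ((p - 1) * (k + j)) * Nat.fib p / (G (p * (k + j)) * G (p * (k + j) + p))) := by
  obtain ⟨r, rfl⟩ := Nat.exists_eq_add_one_of_ne_zero hp.ne'
  rw [Nat.add_sub_cancel, mul_sum]
  refine sum_congr rfl fun k hk ↦ ?_
  have hk := mem_Icc.mp hk
  rw [mul_div_left_comm, fib_mul_div_eq_sum_range hG _ _ _ fun j hj ↦ by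
    rw [← mul_add]; exact hG0 _ (mem_Icc.mpr ⟨by omega, by omega⟩), mul_sum]
  refine sum_congr rfl fun j _ ↦ ?_
  have hsign : (-1 : K) ^ (k * r) * (-1) ^ ((r + 1) * j) = (-1) ^ j * (-1) ^ (r * (k + j)) := by
    rw [← pow_add, ← pow_add]
    ring_nf
  rw [← mul_add, show (r + 1) * k + (r + 1) * (j + 1) = (r + 1) * (k + j) + (r + 1) by ring,
    mul_div_assoc, mul_div_assoc, ← mul_assoc, hsign]
  ring

theorem stmt8 (G : ℕ → ℝ) (hG : ∀ i, G (i+2) = G (i+1) + G i)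
    (n q p : ℕ) (hp : 0 < p) (hn : Even n) (hq : Even q)
    (hGnz : ∀ k ∈ Icc 1 (n+q), G (p*k) ≠ 0) :
    (Nat.fib (p*q) : ℝ) * ∑ k ∈ Icc 1 n, (-1 : ℝ)^(k*(p-1)) / (G (p*k) * G (p*k + p*q)) =
    (Nat.fib (p*n) : ℝ) * ∑ k ∈ Icc 1 q, (-1 : ℝ)^(k*(p-1)) / (G (p*k) * G (p*k + p*n)) := by
  rw [fib_mul_mul_sum_eq_sum_sum_neg_one_pow hG hp n q hGnz,
    fib_mul_mul_sum_eq_sum_sum_neg_one_pow hG hp q n (add_comm n q ▸ hGnz)]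
  exact sum_Icc_sum_range_neg_one_pow_comm
    (fun s ↦ (-1) ^ ((p - 1) * s) * Nat.fib p / (G (p * s) * G (p * s + p))) hn hq
end

section
/- If p, q, n, t are integers with p, q, n positive and pqn odd, then L_{pq} · ∑_{k=1}^{2n} (−1)^{k−1} G_{pk+pq+t} = L_{pn} · ∑_{k=1}^{2q} (−1)^{k−1} G_{pk+pn+t}. -/
/-!
For odd `m`, `L_m G_{x+m} = G_{x+2m} - G_x`, a case of `L_m G_x = G_{x+m} + (-1)^m G_{x-m}`.
With `f k = (-1)^(k-1) G_{pk+t}`, and since `2q` is even, this turns the left-hand side into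
`∑_{k=1}^{2n} (f (k + 2q) - f k) = F (2n + 2q) - F (2n) - F (2q)` for the partial sums `F` of `f`,
which is symmetric in `n` and `q`.
-/

open Finset

theorem lucas_mul_eq_add_neg_one_pow_mul {L G : ℤ → ℤ} (hL0 : L 0 = 2) (hL1 : L 1 = 1)
    (hL : ∀ m : ℤ, L (m + 1) = L m + L (m - 1)) (hG : ∀ m : ℤ, G (m + 1) = G m + G (m - 1))
    (m : ℕ) (x : ℤ) : L m * G x = G (x + m) + (-1) ^ m * G (x - m) := by
  have hL₂ (y : ℤ) : L (y + 2) = L (y + 1) + L y := by simpa [add_assoc] using hL (y + 1)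
  have hG₂ (y : ℤ) : G (y + 2) = G (y + 1) + G y := by simpa [add_assoc] using hG (y + 1)
  induction m using Nat.twoStepInduction generalizing x with
  | zero => rw [Nat.cast_zero, hL0, add_zero, sub_zero, pow_zero]; ring
  | one => rw [Nat.cast_one, hL1, pow_one, hG]; ring
  | more m ih₀ ih₁ =>
    push_cast at ih₁ ⊢
    rw [hL₂, add_mul, ih₀, ih₁, show x + (m + 2) = x + m + 2 by ring, hG₂,
      show x - m = x - (m + 2) + 2 by ring, hG₂]
    ring_nf

theorem lucas_mul_eq_sub_of_odd {L G : ℤ → ℤ} (hL0 : L 0 = 2) (hL1 : L 1 = 1)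
    (hL : ∀ m : ℤ, L (m + 1) = L m + L (m - 1)) (hG : ∀ m : ℤ, G (m + 1) = G m + G (m - 1))
    {m : ℕ} (hm : Odd m) (x : ℤ) : L m * G (x + m) = G (x + 2 * m) - G x := by
  rw [lucas_mul_eq_add_neg_one_pow_mul hL0 hL1 hL hG, hm.neg_one_pow, add_sub_cancel_right]
  ring_nf

theorem sum_Icc_shift_sub_eq {M : Type*} [AddCommGroup M] (f : ℕ → M) (a b : ℕ) :
    ∑ k ∈ Icc 1 a, (f (k + b) - f k) =
      ∑ k ∈ Icc 1 (a + b), f k - ∑ k ∈ Icc 1 a, f k - ∑ k ∈ Icc 1 b, f k := by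
  induction a with
  | zero => simp
  | succ a ih =>
    rw [sum_Icc_succ_top (by omega), sum_Icc_succ_top (by omega), ih,
      show a + 1 + b = a + b + 1 by omega, sum_Icc_succ_top (by omega)]
    abel

theorem sum_Icc_shift_sub_comm {M : Type*} [AddCommGroup M] (f : ℕ → M) (a b : ℕ) :
    ∑ k ∈ Icc 1 a, (f (k + b) - f k) = ∑ k ∈ Icc 1 b, (f (k + a) - f k) := by
  rw [sum_Icc_shift_sub_eq, sum_Icc_shift_sub_eq, add_comm b a]
  abel

theorem stmt9_general (L G : ℤ → ℤ)
    (hL0 : L 0 = 2) (hL1 : L 1 = 1) (hL : ∀ m : ℤ, L (m+1) = L m + L (m-1))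
    (hG : ∀ m : ℤ, G (m+1) = G m + G (m-1))
    (p q n : ℕ) (t : ℤ) (hodd : Odd (p*q*n)) :
    L (p*q) * ∑ k ∈ Icc 1 (2*n), (-1 : ℤ)^(k-1) * G ((p*k : ℤ) + p*q + t) =
    L (p*n) * ∑ k ∈ Icc 1 (2*q), (-1 : ℤ)^(k-1) * G ((p*k : ℤ) + p*n + t) := by
  set f : ℕ → ℤ := fun k => (-1) ^ (k - 1) * G (p * k + t)
  have key : ∀ a b : ℕ, Odd (p * b) →
      L (p * b) * ∑ k ∈ Icc 1 (2 * a), (-1 : ℤ) ^ (k - 1) * G ((p * k : ℤ) + p * b + t) =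
        ∑ k ∈ Icc 1 (2 * a), (f (k + 2 * b) - f k) := by
    intro a b hb
    rw [mul_sum]
    refine sum_congr rfl fun k hk => ?_
    have hk₁ : 1 ≤ k := (mem_Icc.mp hk).1
    have hsign : (-1 : ℤ) ^ (k + 2 * b - 1) = (-1) ^ (k - 1) := by
      rw [show k + 2 * b - 1 = k - 1 + 2 * b by omega, pow_add, pow_mul, neg_one_sq, one_pow,
        mul_one]
    have hterm : L (p * b) * G (p * k + p * b + t) = G (p * (k + 2 * b) + t) - G (p * k + t) := by
      have h := lucas_mul_eq_sub_of_odd hL0 hL1 hL hG hb (p * k + t)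
      push_cast at h
      rw [show (p * k + p * b + t : ℤ) = p * k + t + p * b by ring, h]
      ring_nf
    simp only [f, hsign]
    push_cast
    rw [mul_left_comm, hterm, mul_sub]
  have hpq : Odd (p * q) := (Nat.odd_mul.mp hodd).1
  have hpn : Odd (p * n) := Nat.odd_mul.mpr ⟨(Nat.odd_mul.mp hpq).1, (Nat.odd_mul.mp hodd).2⟩
  rw [key n q hpq, key q n hpn, sum_Icc_shift_sub_comm]

theorem stmt9 (L G : ℤ → ℤ)
    (hL0 : L 0 = 2) (hL1 : L 1 = 1) (hL : ∀ m : ℤ, L (m+1) = L m + L (m-1))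
    (hG : ∀ m : ℤ, G (m+1) = G m + G (m-1))
    (p q n : ℕ) (t : ℤ) (hp : 0 < p) (hq : 0 < q) (hn : 0 < n) (hodd : Odd (p*q*n)) :
    L (p*q) * ∑ k ∈ Icc 1 (2*n), (-1 : ℤ)^(k-1) * G ((p*k : ℤ) + p*q + t) =
    L (p*n) * ∑ k ∈ Icc 1 (2*q), (-1 : ℤ)^(k-1) * G ((p*k : ℤ) + p*n + t) :=
  stmt9_general L G hL0 hL1 hL hG p q n t hodd
end

section
/- If p, q, n, t are integers with p, q, n positive and pqn odd, then L_{pq} · ∑_{k=1}^{n} G_{2pk+pq+t} = L_{pn} · ∑_{k=1}^{q} G_{2pk+pn+t}. -/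
/-!
Multiplying by a Lucas number shifts a Fibonacci-type sequence both ways:
`L m * G x = G (x + m) + (-1) ^ m * G (x - m)`. For odd `m = p * b` this turns each term
`L (p * b) * G (2 * p * k + p * b + t)` into the difference `f (k + b) - f k`, where
`f k = G (2 * p * k + t)`, so the left-hand sum telescopes to `S (a + b) - S a - S b`
with `S` the partial sums of `f`, an expression symmetric in `a` and `b`.
-/

open Finset

theorem sum_Icc_add_sub_eq {R : Type*} [AddCommGroup R] (f : ℕ → R) (a b : ℕ) :
    ∑ k ∈ Icc 1 a, (f (k + b) - f k) =
      ∑ k ∈ Icc 1 (a + b), f k - ∑ k ∈ Icc 1 a, f k - ∑ k ∈ Icc 1 b, f k := by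
  induction a with
  | zero => simp
  | succ a ih =>
    rw [sum_Icc_succ_top (by omega), ih, Nat.add_right_comm a 1 b, sum_Icc_succ_top (by omega),
      sum_Icc_succ_top (by omega)]
    abel

section FibonacciLike

variable {R : Type*} [CommRing R]

theorem fibLike_add_two {G : ℤ → R} (hG : ∀ m : ℤ, G (m + 1) = G m + G (m - 1)) (x : ℤ) :
    G (x + 2) = G (x + 1) + G x := by
  simpa [add_assoc, one_add_one_eq_two] using hG (x + 1)

theorem lucas_mul_fibLike {L G : ℤ → R} (hL0 : L 0 = 2) (hL1 : L 1 = 1)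
    (hL : ∀ m : ℤ, L (m + 1) = L m + L (m - 1)) (hG : ∀ m : ℤ, G (m + 1) = G m + G (m - 1))
    (m : ℕ) (x : ℤ) : L m * G x = G (x + m) + (-1) ^ m * G (x - m) := by
  induction m using Nat.twoStepInduction generalizing x with
  | zero => simp only [Nat.cast_zero, hL0, add_zero, sub_zero, pow_zero]; ring
  | one => simp only [Nat.cast_one, hL1, one_mul, pow_one]; linear_combination -hG x
  | more m ih ih₁ =>
    have hLm : L (m + 2) = L (m + 1) + L m := fibLike_add_two hL m
    have hGright : G (x + (m + 2)) = G (x + (m + 1)) + G (x + m) := by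
      simpa only [add_assoc] using fibLike_add_two hG (x + m)
    have hGleft : G (x - m) = G (x - (m + 1)) + G (x - (m + 2)) := by
      convert fibLike_add_two hG (x - (m + 2)) using 2 <;> ring_nf
    push_cast at ih₁ ⊢
    rw [hLm]
    linear_combination ih x + ih₁ x - hGright + (-1) ^ m * hGleft

theorem lucas_mul_sum_fibLike {L G : ℤ → R} (hL0 : L 0 = 2) (hL1 : L 1 = 1)
    (hL : ∀ m : ℤ, L (m + 1) = L m + L (m - 1))
    (hG : ∀ m : ℤ, G (m + 1) = G m + G (m - 1)) (p a b : ℕ) (t : ℤ) (hodd : Odd (p * b)) :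
    L (p * b) * ∑ k ∈ Icc 1 a, G ((2 * p * k : ℤ) + p * b + t) =
      ∑ k ∈ Icc 1 (a + b), G (2 * p * k + t) - ∑ k ∈ Icc 1 a, G (2 * p * k + t)
        - ∑ k ∈ Icc 1 b, G (2 * p * k + t) := by
  rw [← sum_Icc_add_sub_eq, mul_sum]
  refine sum_congr rfl fun k _ => ?_
  have h := lucas_mul_fibLike hL0 hL1 hL hG (p * b) (2 * p * k + p * b + t)
  rw [hodd.neg_one_pow] at h
  push_cast at h ⊢
  rw [h]
  ring_nf

end FibonacciLike

theorem stmt10_general (L G : ℤ → ℤ)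
    (hL0 : L 0 = 2) (hL1 : L 1 = 1) (hL : ∀ m : ℤ, L (m+1) = L m + L (m-1))
    (hG : ∀ m : ℤ, G (m+1) = G m + G (m-1))
    (p q n : ℕ) (t : ℤ) (hodd : Odd (p*q*n)) :
    L (p*q) * ∑ k ∈ Icc 1 n, G ((2*p*k : ℤ) + p*q + t) =
    L (p*n) * ∑ k ∈ Icc 1 q, G ((2*p*k : ℤ) + p*n + t) := by
  obtain ⟨hpq, hn⟩ := Nat.odd_mul.mp hodd
  have hpn : Odd (p * n) := Nat.odd_mul.mpr ⟨(Nat.odd_mul.mp hpq).1, hn⟩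
  rw [lucas_mul_sum_fibLike hL0 hL1 hL hG p n q t hpq,
    lucas_mul_sum_fibLike hL0 hL1 hL hG p q n t hpn, Nat.add_comm]
  abel

theorem stmt10 (L G : ℤ → ℤ)
    (hL0 : L 0 = 2) (hL1 : L 1 = 1) (hL : ∀ m : ℤ, L (m+1) = L m + L (m-1))
    (hG : ∀ m : ℤ, G (m+1) = G m + G (m-1))
    (p q n : ℕ) (t : ℤ) (hp : 0 < p) (hq : 0 < q) (hn : 0 < n) (hodd : Odd (p*q*n)) :
    L (p*q) * ∑ k ∈ Icc 1 n, G ((2*p*k : ℤ) + p*q + t) =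
    L (p*n) * ∑ k ∈ Icc 1 q, G ((2*p*k : ℤ) + p*n + t) :=
  stmt10_general L G hL0 hL1 hL hG p q n t hodd
end

section
/- If p, q, n, t are integers with p, q, n positive, and q and n are both even, then F_{pq} · ∑_{k=1}^{n} (−1)^{k−1} G_{2pk+pq+t} = F_{pn} · ∑_{k=1}^{q} (−1)^{k−1} G_{2pk+pn+t}. -/
open Finset Real goldenRatio

/-!
A sequence `G` with the Fibonacci recurrence on `ℤ` is `G₀ F_{m-1} + G₁ F_m`, so the identity,
being linear in `G`, reduces to `G = F` (at shifts `t - 1` and `t`). By Binet's formula, and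
since `ψ ^ a = φ ^ (-a)` for even `a`, it then suffices to prove it with `F_a` replaced by
`r^a - r^{-a}` and `G_m` by `r^m`, for `r = φ, ψ`. The alternating sums are then geometric with
ratio `-r^{2p}`, and with `u = r^{pq}`, `v = r^{pn}` both sides become
`-r^{t+2p} (u² - 1)(v² - 1) / (1 + r^{2p})`.
-/

theorem eq_of_fib_recurrence {M : Type*} [AddCommGroup M] {f g : ℤ → M}
    (hf : ∀ m, f (m + 1) = f m + f (m - 1)) (hg : ∀ m, g (m + 1) = g m + g (m - 1))
    (h0 : f 0 = g 0) (h1 : f 1 = g 1) : f = g := by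
  suffices h : ∀ m : ℤ, f m = g m ∧ f (m + 1) = g (m + 1) from funext fun m => (h m).1
  intro m
  induction m using Int.induction_on with
  | zero => exact ⟨h0, h1⟩
  | succ k ih => exact ⟨ih.2, by rw [hf, hg, add_sub_cancel_right, ih.1, ih.2]⟩
  | pred k ih =>
    refine ⟨?_, by rw [sub_add_cancel]; exact ih.1⟩
    have hf' := hf (-k); have hg' := hg (-k)
    rw [ih.1, ih.2] at hf'
    rw [hf'] at hg'
    exact add_left_cancel hg'

theorem Int.fib_recurrence (m : ℤ) : Int.fib (m + 1) = Int.fib m + Int.fib (m - 1) := by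
  have := Int.fib_add_two (m - 1)
  rw [show m - 1 + 2 = m + 1 by ring, sub_add_cancel] at this
  rw [this, add_comm]

theorem eq_mul_fib_sub_one_add_mul_fib {R : Type*} [CommRing R] {G : ℤ → R}
    (hG : ∀ m, G (m + 1) = G m + G (m - 1)) (m : ℤ) :
    G m = G 0 * Int.fib (m - 1) + G 1 * Int.fib m := by
  refine congrFun (eq_of_fib_recurrence (g := fun m => G 0 * Int.fib (m - 1) + G 1 * Int.fib m)
    hG (fun m => ?_) (by simp) (by simp)) m
  have h := Int.fib_recurrence (m - 1)
  rw [sub_add_cancel] at h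
  rw [add_sub_cancel_right, Int.fib_recurrence m, h]
  push_cast
  ring

theorem sum_mul_eq_of_fib_recurrence {R ι : Type*} [CommRing R] {G : ℤ → R}
    (hG : ∀ m, G (m + 1) = G m + G (m - 1)) (s : Finset ι) (w : ι → R) (e : ι → ℤ) :
    ∑ i ∈ s, w i * G (e i) =
      G 0 * ∑ i ∈ s, w i * Int.fib (e i - 1) + G 1 * ∑ i ∈ s, w i * Int.fib (e i) := by
  rw [mul_sum, mul_sum, ← sum_add_distrib]
  refine sum_congr rfl fun i _ => ?_
  rw [eq_mul_fib_sub_one_add_mul_fib hG (e i)]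
  ring

theorem one_add_mul_sum_Icc_neg_one_pow_mul_pow {R : Type*} [CommRing R] (s : R) (N : ℕ) :
    (1 + s) * ∑ k ∈ Icc 1 N, (-1) ^ (k - 1) * s ^ k = s * (1 - (-s) ^ N) := by
  induction N with
  | zero => simp
  | succ N ih =>
    rw [sum_Icc_succ_top (by omega), mul_add, ih, Nat.add_sub_cancel, neg_pow]
    ring

theorem sub_zpow_neg_mul_sum_zpow_comm {K : Type*} [Field K] {r : K} (hr : r ≠ 0) {p : ℕ}
    (hs : 1 + r ^ (2 * p) ≠ 0) {q n : ℕ} (hq : Even q) (hn : Even n) (t : ℤ) :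
    (r ^ (p * q : ℤ) - r ^ (-(p * q : ℤ))) *
        ∑ k ∈ Icc 1 n, (-1) ^ (k - 1) * r ^ ((2 * p * k : ℤ) + p * q + t) =
      (r ^ (p * n : ℤ) - r ^ (-(p * n : ℤ))) *
        ∑ k ∈ Icc 1 q, (-1) ^ (k - 1) * r ^ ((2 * p * k : ℤ) + p * n + t) := by
  have hsum : ∀ (N : ℕ) (c : ℤ), Even N → (1 + r ^ (2 * p)) *
      ∑ k ∈ Icc 1 N, (-1) ^ (k - 1) * r ^ ((2 * p * k : ℤ) + c + t) =
        r ^ t * r ^ c * r ^ (2 * p) * (1 - (r ^ p) ^ (2 * N)) := by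
    intro N c hN
    have hterm (k : ℕ) :
        r ^ ((2 * p * k : ℤ) + c + t) = r ^ t * r ^ c * (r ^ (2 * p)) ^ k := by
      rw [zpow_add₀ hr, zpow_add₀ hr, ← pow_mul, ← zpow_natCast]
      push_cast
      ring
    simp_rw [hterm, mul_left_comm _ (r ^ t * r ^ c), ← mul_sum, mul_left_comm (1 + r ^ (2 * p)),
      one_add_mul_sum_Icc_neg_one_pow_mul_pow, hN.neg_pow]
    ring
  apply mul_left_cancel₀ hs
  rw [mul_left_comm (1 + r ^ (2 * p)), mul_left_comm (1 + r ^ (2 * p)), hsum n _ hn,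
    hsum q _ hq]
  simp only [zpow_neg, ← Nat.cast_mul, zpow_natCast, pow_mul]
  field_simp
  ring

theorem goldenRatio_zpow_neg_of_even {a : ℤ} (ha : Even a) : φ ^ (-a) = ψ ^ a := by
  rw [zpow_neg, ← inv_zpow, inv_goldenRatio, ha.neg_zpow]

theorem goldenConj_zpow_neg_of_even {a : ℤ} (ha : Even a) : ψ ^ (-a) = φ ^ a := by
  rw [zpow_neg, ← inv_zpow, inv_goldenConj, ha.neg_zpow]

theorem Int.fib_mul_sum_comm (p : ℕ) {q n : ℕ} (hq : Even q) (hn : Even n) (t : ℤ) :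
    fib (p * q) * ∑ k ∈ Icc 1 n, (-1 : ℤ) ^ (k - 1) * fib ((2 * p * k : ℤ) + p * q + t) =
      fib (p * n) *
        ∑ k ∈ Icc 1 q, (-1 : ℤ) ^ (k - 1) * fib ((2 * p * k : ℤ) + p * n + t) := by
  have hpq : Even (p * q : ℤ) := ((Int.even_coe_nat q).2 hq).mul_left _
  have hpn : Even (p * n : ℤ) := ((Int.even_coe_nat n).2 hn).mul_left _
  have hs : ∀ r : ℝ, 1 + r ^ (2 * p) ≠ 0 := fun r =>
    (add_pos_of_pos_of_nonneg one_pos ((even_two_mul p).pow_nonneg r)).ne'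
  have hφ := sub_zpow_neg_mul_sum_zpow_comm goldenRatio_ne_zero (hs φ) hq hn t
  have hψ := sub_zpow_neg_mul_sum_zpow_comm goldenConj_ne_zero (hs ψ) hq hn t
  rw [goldenRatio_zpow_neg_of_even hpq, goldenRatio_zpow_neg_of_even hpn] at hφ
  rw [goldenConj_zpow_neg_of_even hpq, goldenConj_zpow_neg_of_even hpn] at hψ
  apply Int.cast_injective (α := ℝ)
  push_cast
  simp only [coe_intFib_eq, mul_div_assoc', mul_sub, ← sum_div, sum_sub_distrib]
  field_simp
  linear_combination hφ + hψ

theorem stmt12_general (F G : ℤ → ℤ)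
    (hF0 : F 0 = 0) (hF1 : F 1 = 1) (hF : ∀ m : ℤ, F (m+1) = F m + F (m-1))
    (hG : ∀ m : ℤ, G (m+1) = G m + G (m-1))
    (p q n : ℕ) (t : ℤ)
    (hqe : Even q) (hne : Even n) :
    F (p*q) * ∑ k ∈ Icc 1 n, (-1 : ℤ)^(k-1) * G ((2*p*k : ℤ) + p*q + t) =
    F (p*n) * ∑ k ∈ Icc 1 q, (-1 : ℤ)^(k-1) * G ((2*p*k : ℤ) + p*n + t) := by
  obtain rfl : F = Int.fib :=
    eq_of_fib_recurrence hF Int.fib_recurrence (by rw [hF0, Int.fib_zero])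
      (by rw [hF1, Int.fib_one])
  have h₀ := Int.fib_mul_sum_comm p hqe hne (t - 1)
  have h₁ := Int.fib_mul_sum_comm p hqe hne t
  rw [sum_mul_eq_of_fib_recurrence hG, sum_mul_eq_of_fib_recurrence hG]
  simp only [Int.cast_id, add_sub_assoc]
  linear_combination G 0 * h₀ + G 1 * h₁

theorem stmt12 (F G : ℤ → ℤ)
    (hF0 : F 0 = 0) (hF1 : F 1 = 1) (hF : ∀ m : ℤ, F (m+1) = F m + F (m-1))
    (hG : ∀ m : ℤ, G (m+1) = G m + G (m-1))
    (p q n : ℕ) (t : ℤ) (hp : 0 < p) (hq : 0 < q) (hn : 0 < n)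
    (hqe : Even q) (hne : Even n) :
    F (p*q) * ∑ k ∈ Icc 1 n, (-1 : ℤ)^(k-1) * G ((2*p*k : ℤ) + p*q + t) =
    F (p*n) * ∑ k ∈ Icc 1 q, (-1 : ℤ)^(k-1) * G ((2*p*k : ℤ) + p*n + t) :=
  stmt12_general F G hF0 hF1 hF hG p q n t hqe hne
end

section
/- If p, q, n, t are positive integers with pnq odd and all relevant terms G_{pk+t}, G_{pk+2pq+t}, G_{pk+2pn+t} nonzero, then L_{pq} · ∑_{k=1}^{2n} (−1)^{k−1} G_{pk+pq+t} / (G_{pk+t} G_{pk+2pq+t}) = L_{pn} · ∑_{k=1}^{2q} (−1)^{k−1} G_{pk+pn+t} / (G_{pk+t} G_{pk+2pn+t}). -/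
/-!
For odd `m` the identity `L_m G_{a+m} = G_{a+2m} + (-1)^m G_a` becomes
`L_m G_{a+m} / (G_a G_{a+2m}) = 1/G_a - 1/G_{a+2m}`. With `f k = (-1)^(k-1) / G_{pk+t}` and
`m = pq` (resp. `pn`), both sides are therefore sums `∑_{k=1}^{N} (f k - f (k+K))` with
`(N, K) = (2n, 2q)` resp. `(2q, 2n)`, and each of these equals `∑_{k ≤ N} f k + ∑_{k ≤ K} f k
- ∑_{k ≤ N+K} f k`, which is symmetric in `N` and `K`.
-/

open Finset

theorem Finset.sum_range_sub_shift_comm {M : Type*} [AddCommGroup M] (f : ℕ → M) (N K : ℕ) :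
    ∑ k ∈ range N, (f k - f (k + K)) = ∑ k ∈ range K, (f k - f (k + N)) := by
  have shift : ∀ A B, ∑ k ∈ range A, f (k + B) = ∑ k ∈ range (B + A), f k - ∑ k ∈ range B, f k := by
    intro A B
    rw [sum_range_add, add_sub_cancel_left]
    simp only [add_comm B]
  simp only [sum_sub_distrib, shift, add_comm K N]
  abel

theorem Finset.sum_Icc_one_sub_shift_comm {M : Type*} [AddCommGroup M] (f : ℕ → M) (N K : ℕ) :
    ∑ k ∈ Icc 1 N, (f k - f (k + K)) = ∑ k ∈ Icc 1 K, (f k - f (k + N)) := by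
  have h := sum_range_sub_shift_comm (fun k => f (1 + k)) N K
  simp only [← add_assoc] at h
  rwa [← Ico_add_one_right_eq_Icc, sum_Ico_eq_sum_range, ← Ico_add_one_right_eq_Icc,
    sum_Ico_eq_sum_range, Nat.add_sub_cancel, Nat.add_sub_cancel]

theorem lucas_mul_add_eq {R : Type*} [CommRing R] (L : ℕ → ℤ) (G : ℕ → R)
    (hL0 : L 0 = 2) (hL1 : L 1 = 1) (hL : ∀ m, L (m + 2) = L (m + 1) + L m)
    (hG : ∀ m, G (m + 2) = G (m + 1) + G m) (m : ℕ) :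
    ∀ a, (L m : R) * G (a + m) = G (a + 2 * m) + (-1) ^ m * G a := by
  induction m using Nat.twoStepInduction with
  | zero => intro a; simp [hL0]; ring
  | one => intro a; simp [hL1, hG]
  | more m ih ih' =>
    intro a
    have h₁ := ih (a + 2)
    have h₂ := ih' (a + 1)
    rw [show a + 2 + m = a + (m + 2) by ring, show a + 2 + 2 * m = a + 2 * m + 2 by ring] at h₁
    rw [show a + 1 + (m + 1) = a + (m + 2) by ring,
      show a + 1 + 2 * (m + 1) = a + 2 * m + 2 + 1 by ring] at h₂
    rw [hL, show a + 2 * (m + 2) = a + 2 * m + 2 + 2 by ring, hG]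
    push_cast
    linear_combination h₁ + h₂ + (-1) ^ m * hG a

theorem lucas_mul_div_eq_inv_sub_inv {K : Type*} [Field K] (L : ℕ → ℤ) (G : ℕ → K)
    (hL0 : L 0 = 2) (hL1 : L 1 = 1) (hL : ∀ m, L (m + 2) = L (m + 1) + L m)
    (hG : ∀ m, G (m + 2) = G (m + 1) + G m) {m : ℕ} (hm : Odd m) (a : ℕ)
    (ha : G a ≠ 0) (ha' : G (a + 2 * m) ≠ 0) :
    (L m : K) * (G (a + m) / (G a * G (a + 2 * m))) = 1 / G a - 1 / G (a + 2 * m) := by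
  have h := lucas_mul_add_eq L G hL0 hL1 hL hG m a
  rw [hm.neg_one_pow] at h
  field_simp
  linear_combination h

theorem lucas_mul_sum_alternating_eq_sum_sub_shift {K : Type*} [Field K] (L : ℕ → ℤ)
    (G : ℕ → K) (hL0 : L 0 = 2) (hL1 : L 1 = 1) (hL : ∀ m, L (m + 2) = L (m + 1) + L m)
    (hG : ∀ m, G (m + 2) = G (m + 1) + G m) {p s : ℕ} (hps : Odd (p * s)) (t N : ℕ)
    (hG0 : ∀ k ∈ Icc 1 N, G (p * k + t) ≠ 0 ∧ G (p * k + 2 * p * s + t) ≠ 0) :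
    (L (p * s) : K) * ∑ k ∈ Icc 1 N,
        (-1 : K) ^ (k - 1) * G (p * k + p * s + t) / (G (p * k + t) * G (p * k + 2 * p * s + t)) =
      ∑ k ∈ Icc 1 N,
        ((-1 : K) ^ (k - 1) / G (p * k + t) - (-1) ^ (k + 2 * s - 1) / G (p * (k + 2 * s) + t)) := by
  rw [mul_sum]
  refine sum_congr rfl fun k hk => ?_
  have hk1 : 1 ≤ k := (mem_Icc.mp hk).1
  obtain ⟨ha, ha'⟩ := hG0 k hk
  rw [show p * k + 2 * p * s + t = p * k + t + 2 * (p * s) by ring] at ha' ⊢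
  rw [show p * k + p * s + t = p * k + t + p * s by ring,
    show p * (k + 2 * s) + t = p * k + t + 2 * (p * s) by ring,
    show k + 2 * s - 1 = k - 1 + 2 * s by omega, pow_add, pow_mul, neg_one_sq, one_pow, mul_one,
    mul_div_assoc, mul_left_comm,
    lucas_mul_div_eq_inv_sub_inv L G hL0 hL1 hL hG hps _ ha ha']
  ring

theorem stmt16_general (L : ℕ → ℤ) (G : ℕ → ℝ)
    (hL0 : L 0 = 2) (hL1 : L 1 = 1) (hL : ∀ m, L (m+2) = L (m+1) + L m)
    (hG : ∀ m, G (m+2) = G (m+1) + G m)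
    (p q n t : ℕ)
    (hodd : Odd (p*n*q))
    (h1 : ∀ k ∈ Icc 1 (2*n), G (p*k + t) ≠ 0 ∧ G (p*k + 2*p*q + t) ≠ 0)
    (h2 : ∀ k ∈ Icc 1 (2*q), G (p*k + t) ≠ 0 ∧ G (p*k + 2*p*n + t) ≠ 0) :
    (L (p*q) : ℝ) * ∑ k ∈ Icc 1 (2*n), (-1 : ℝ)^(k-1) * G (p*k + p*q + t) / (G (p*k + t) * G (p*k + 2*p*q + t)) =
    (L (p*n) : ℝ) * ∑ k ∈ Icc 1 (2*q), (-1 : ℝ)^(k-1) * G (p*k + p*n + t) / (G (p*k + t) * G (p*k + 2*p*n + t)) := by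
  obtain ⟨⟨hp, hn⟩, hq⟩ : (Odd p ∧ Odd n) ∧ Odd q := by simpa only [Nat.odd_mul] using hodd
  rw [lucas_mul_sum_alternating_eq_sum_sub_shift L G hL0 hL1 hL hG (Nat.odd_mul.mpr ⟨hp, hq⟩) t _ h1,
    lucas_mul_sum_alternating_eq_sum_sub_shift L G hL0 hL1 hL hG (Nat.odd_mul.mpr ⟨hp, hn⟩) t _ h2]
  exact sum_Icc_one_sub_shift_comm (fun k => (-1 : ℝ) ^ (k - 1) / G (p * k + t)) (2 * n) (2 * q)

theorem stmt16 (L : ℕ → ℤ) (G : ℕ → ℝ)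
    (hL0 : L 0 = 2) (hL1 : L 1 = 1) (hL : ∀ m, L (m+2) = L (m+1) + L m)
    (hG : ∀ m, G (m+2) = G (m+1) + G m)
    (p q n t : ℕ) (hp : 0 < p) (hq : 0 < q) (hn : 0 < n) (ht : 0 < t)
    (hodd : Odd (p*n*q))
    (h1 : ∀ k ∈ Icc 1 (2*n), G (p*k + t) ≠ 0 ∧ G (p*k + 2*p*q + t) ≠ 0)
    (h2 : ∀ k ∈ Icc 1 (2*q), G (p*k + t) ≠ 0 ∧ G (p*k + 2*p*n + t) ≠ 0) :
    (L (p*q) : ℝ) * ∑ k ∈ Icc 1 (2*n), (-1 : ℝ)^(k-1) * G (p*k + p*q + t) / (G (p*k + t) * G (p*k + 2*p*q + t)) =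
    (L (p*n) : ℝ) * ∑ k ∈ Icc 1 (2*q), (-1 : ℝ)^(k-1) * G (p*k + p*n + t) / (G (p*k + t) * G (p*k + 2*p*n + t)) :=
  stmt16_general L G hL0 hL1 hL hG p q n t hodd h1 h2
end

section
/- Let W be the Horadam sequence W_0=a, W_1=b, W_i = P·W_{i−1} − Q·W_{i−2}, and U_i = W_i(0,1;P,Q). If n, q are nonnegative integers, p is a positive integer, and W_{pk} ≠ 0 for all 1 ≤ k ≤ n+q, then U_{pq} · ∑_{k=1}^{n} Q^{pk} / (W_{pk} W_{pk+pq}) = U_{pn} · ∑_{k=1}^{q} Q^{pk} / (W_{pk} W_{pk+pn}), provided also A = b − β·a ≠ 0 where β = (P − √(P²−4Q))/2. -/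
/-!
For solutions `X`, `Y` of `Z (i+2) = P Z (i+1) - Q Z i`, the Casoratian
`X k Y (k+1) - X (k+1) Y k` is multiplied by `Q` at each step, and `m ↦ X k Y (k+m) - X (k+m) Y k`
is again a solution vanishing at `0`; hence
`X k Y (k+m) - X (k+m) Y k = Q^k (X 0 Y 1 - X 1 Y 0) U m`.
Dividing by `W k W (k+m)` shows that `c U m Q^k / (W k W (k+m)) = g k - g (k+m)` for
`g k = X k / W k` and `c = X 0 W 1 - X 1 W 0`, which is `a² + b²` for the solution `X` with seeds
`b, -a`. Sampled at multiples of `p`, both sides of the theorem times `c` then telescope to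
`∑_{k ≤ n} g k + ∑_{k ≤ q} g k - ∑_{k ≤ n+q} g k`.
-/

open Finset

theorem Finset.sum_Icc_sub_shift_comm {M : Type*} [AddCommGroup M] (g : ℕ → M) (n q : ℕ) :
    ∑ k ∈ Icc 1 n, (g k - g (k + q)) = ∑ k ∈ Icc 1 q, (g k - g (k + n)) := by
  suffices ∀ n q, ∑ k ∈ Icc 1 n, (g k - g (k + q)) =
      ∑ k ∈ range n, g (1 + k) + ∑ k ∈ range q, g (1 + k) - ∑ k ∈ range (q + n), g (1 + k) by
    rw [this, this, add_comm n q, add_comm (∑ k ∈ range n, _)]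
  intro n q
  rw [sum_range_add, ← Ico_add_one_right_eq_Icc, sum_Ico_eq_sum_range, add_tsub_cancel_right,
    sum_sub_distrib]
  simp only [add_right_comm 1 _ q, add_assoc]
  abel

section Horadam

variable {R : Type*} [CommRing R]

def IsHoradam (P Q : R) (X : ℕ → R) : Prop :=
  ∀ i, X (i + 2) = P * X (i + 1) - Q * X i

def horadam (P Q a b : R) : ℕ → R
  | 0 => a
  | 1 => b
  | n + 2 => P * horadam P Q a b (n + 1) - Q * horadam P Q a b n

variable {P Q : R} {X Y U : ℕ → R}

theorem isHoradam_horadam (P Q a b : R) : IsHoradam P Q (horadam P Q a b) := fun _ => rfl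

theorem isHoradam_zero (P Q : R) : IsHoradam P Q 0 := fun _ => by simp

theorem IsHoradam.ext (hX : IsHoradam P Q X) (hY : IsHoradam P Q Y) (h0 : X 0 = Y 0)
    (h1 : X 1 = Y 1) : X = Y := by
  funext n
  induction n using Nat.twoStepInduction with
  | zero => exact h0
  | one => exact h1
  | more n ih ih' => rw [hX, hY, ih, ih']

theorem IsHoradam.casoratian_eq (hX : IsHoradam P Q X) (hY : IsHoradam P Q Y) (k : ℕ) :
    X k * Y (k + 1) - X (k + 1) * Y k = Q ^ k * (X 0 * Y 1 - X 1 * Y 0) := by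
  induction k with
  | zero => simp
  | succ k ih =>
    rw [hX, hY, pow_succ', mul_assoc, ← ih]
    ring

theorem IsHoradam.mul_shift_sub_mul_shift (hX : IsHoradam P Q X) (hY : IsHoradam P Q Y)
    (hU : IsHoradam P Q U) (hU0 : U 0 = 0) (hU1 : U 1 = 1) (k m : ℕ) :
    X k * Y (k + m) - X (k + m) * Y k = Q ^ k * (X 0 * Y 1 - X 1 * Y 0) * U m := by
  have hD : IsHoradam P Q fun m => X k * Y (k + m) - X (k + m) * Y k := fun i => by
    dsimp only
    rw [← add_assoc, ← add_assoc, hX, hY]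
    ring
  have hcU : IsHoradam P Q fun m => Q ^ k * (X 0 * Y 1 - X 1 * Y 0) * U m := fun i => by
    dsimp only
    rw [hU]
    ring
  refine congrFun (hD.ext hcU (by simp [hU0]) ?_) m
  simpa [hU1] using hX.casoratian_eq hY k

end Horadam

section Field

variable {F : Type*} [Field F] {P Q : F} {X W U : ℕ → F}

theorem IsHoradam.div_sub_div_shift (hX : IsHoradam P Q X) (hW : IsHoradam P Q W)
    (hU : IsHoradam P Q U) (hU0 : U 0 = 0) (hU1 : U 1 = 1) {k m : ℕ} (hk : W k ≠ 0)
    (hkm : W (k + m) ≠ 0) :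
    X k / W k - X (k + m) / W (k + m) =
      (X 0 * W 1 - X 1 * W 0) * (U m * (Q ^ k / (W k * W (k + m)))) := by
  rw [div_sub_div _ _ hk hkm, mul_comm (W k) (X (k + m)),
    hX.mul_shift_sub_mul_shift hW hU hU0 hU1]
  field_simp

theorem IsHoradam.mul_sum_eq_sum_sub_shift (hX : IsHoradam P Q X) (hW : IsHoradam P Q W)
    (hU : IsHoradam P Q U) (hU0 : U 0 = 0) (hU1 : U 1 = 1) {p N M : ℕ}
    (hWnz : ∀ k ∈ Icc 1 (N + M), W (p * k) ≠ 0) :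
    (X 0 * W 1 - X 1 * W 0) *
        (U (p * M) * ∑ k ∈ Icc 1 N, Q ^ (p * k) / (W (p * k) * W (p * k + p * M))) =
      ∑ k ∈ Icc 1 N, (X (p * k) / W (p * k) - X (p * (k + M)) / W (p * (k + M))) := by
  rw [mul_sum, mul_sum]
  refine sum_congr rfl fun k hk => ?_
  have hk' := mem_Icc.mp hk
  rw [mul_add, hX.div_sub_div_shift hW hU hU0 hU1 (hWnz k (by simp only [mem_Icc]; omega))
    (by rw [← mul_add]; exact hWnz (k + M) (by simp only [mem_Icc]; omega))]

end Field

theorem stmt18_general (a b P Q : ℤ)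
    (W U : ℕ → ℝ)
    (hW0 : W 0 = a) (hW1 : W 1 = b) (hW : ∀ i, W (i+2) = P * W (i+1) - Q * W i)
    (hU0 : U 0 = 0) (hU1 : U 1 = 1) (hU : ∀ i, U (i+2) = P * U (i+1) - Q * U i)
    (n q p : ℕ)
    (hWnz : ∀ k ∈ Icc 1 (n+q), W (p*k) ≠ 0) :
    U (p*q) * ∑ k ∈ Icc 1 n, (Q : ℝ)^(p*k) / (W (p*k) * W (p*k + p*q)) =
    U (p*n) * ∑ k ∈ Icc 1 q, (Q : ℝ)^(p*k) / (W (p*k) * W (p*k + p*n)) := by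
  set X := horadam (P : ℝ) Q b (-a)
  have hX : IsHoradam (P : ℝ) Q X := isHoradam_horadam _ _ _ _
  have hc : X 0 * W 1 - X 1 * W 0 = (a : ℝ) ^ 2 + (b : ℝ) ^ 2 := by
    simp only [X, horadam, hW0, hW1]
    ring
  by_cases hab : (a : ℝ) ^ 2 + (b : ℝ) ^ 2 = 0
  · obtain ⟨ha, hb⟩ : (a : ℝ) = 0 ∧ (b : ℝ) = 0 := by
      constructor <;> nlinarith [sq_nonneg (a : ℝ), sq_nonneg (b : ℝ)]
    have hW_zero : W = 0 := (show IsHoradam (P : ℝ) Q W from hW).ext (isHoradam_zero _ _)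
      (by simp [hW0, ha]) (by simp [hW1, hb])
    simp [hW_zero] -- every summand is a division by zero
  · rw [← hc] at hab
    refine mul_left_cancel₀ hab ?_
    rw [hX.mul_sum_eq_sum_sub_shift hW hU hU0 hU1 hWnz,
      hX.mul_sum_eq_sum_sub_shift hW hU hU0 hU1 (by rwa [add_comm]),
      sum_Icc_sub_shift_comm (fun k => X (p * k) / W (p * k))]

theorem stmt18 (a b P Q : ℤ) (hPQ : P * Q ≠ 0) (hΔ : P^2 - 4*Q > 0)
    (W U : ℕ → ℝ)
    (hW0 : W 0 = a) (hW1 : W 1 = b) (hW : ∀ i, W (i+2) = P * W (i+1) - Q * W i)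
    (hU0 : U 0 = 0) (hU1 : U 1 = 1) (hU : ∀ i, U (i+2) = P * U (i+1) - Q * U i)
    (n q p : ℕ) (hp : 0 < p)
    (hWnz : ∀ k ∈ Icc 1 (n+q), W (p*k) ≠ 0)
    (hA : (b : ℝ) - (P - Real.sqrt (P^2 - 4*Q)) / 2 * a ≠ 0) :
    U (p*q) * ∑ k ∈ Icc 1 n, (Q : ℝ)^(p*k) / (W (p*k) * W (p*k + p*q)) =
    U (p*n) * ∑ k ∈ Icc 1 q, (Q : ℝ)^(p*k) / (W (p*k) * W (p*k + p*n)) :=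
  stmt18_general a b P Q W U hW0 hW1 hW hU0 hU1 hU n q p hWnz
end
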